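/- arXiv:math/0507602 — 2 statements merged into one kernel-verified Lean document; each statement's English description precedes it below -/
import Mathlib

section
/- (Skein relation, case k = r.) Let i_1, …, i_r ∈ {1, …, n} be pairwise distinct indices with r ≥ 1, and let u, v, w ∈ F be group elements. Then δ_{i_1}…δ_{i_r}(v · u⁻¹ x_{i_r} u · w)(1) − δ_{i_1}…δ_{i_r}(v w)(1) = δ_{i_1}…δ_{i_{r-1}}(v u⁻¹)(1), where an empty composite of Fox derivatives applied to a group element and evaluated at 1 is understood to be 1. (Topologically: μ_{i_1…i_r}(L, l₊) − μ_{i_1…i_r}(L, l₋) = μ_{i_1…i_{r-1}}(L − L_{i_r}, l_∞).) -/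
open MonoidAlgebra

/-!
Write `i = iᵣ`, `p = v u⁻¹` and `q = u w`, so the two words are `p xᵢ q` and `p q`. The Fox
rules give `δᵢ(p xᵢ q) - δᵢ(p q) = p + (p xᵢ - p) · δᵢ q`. Since `δⱼ((p xᵢ - p) z) = (p xᵢ - p) δⱼ z`
for `j ≠ i`, the factor `p xᵢ - p` survives the remaining derivatives `δ_{i₁} … δ_{iᵣ₋₁}`, none of
which is `δᵢ`, and is then killed by the augmentation.
-/

/-- `FG n` is the free group on `n` generators `x_1, …, x_n`. -/
abbrev FG (n : ℕ) : Type := FreeGroup (Fin n)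

/-- `GR n` is the integral group ring `ℤF` of the free group on `n` generators. -/
abbrev GR (n : ℕ) : Type := MonoidAlgebra ℤ (FG n)

/-- Iterated application of Fox derivatives along a list of indices:
`foxIter δ [i₁, …, iᵣ] x = δ i₁ (δ i₂ (⋯ (δ iᵣ x)))`; the empty list gives `x` itself. -/
noncomputable def foxIter {n : ℕ} (δ : Fin n → (GR n →ₗ[ℤ] GR n)) : List (Fin n) → GR n → GR n
  | [], x => x
  | i :: l, x => δ i (foxIter δ l x)

section Fox

variable {n : ℕ} (δ : Fin n → (GR n →ₗ[ℤ] GR n))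

lemma foxIter_append (s t : List (Fin n)) (x : GR n) :
    foxIter δ (s ++ t) x = foxIter δ s (foxIter δ t x) := by
  induction s with
  | nil => rfl
  | cons j s ih => simp only [List.cons_append, foxIter, ih]

lemma foxIter_add (s : List (Fin n)) (x y : GR n) :
    foxIter δ s (x + y) = foxIter δ s x + foxIter δ s y := by
  induction s with
  | nil => rfl
  | cons j s ih => simp only [foxIter, ih, map_add]

lemma fox_of_mul
    (hδ : ∀ (i : Fin n) (u v : FG n),
      δ i (of ℤ (FG n) (u * v)) = δ i (of ℤ (FG n) u) + of ℤ (FG n) u * δ i (of ℤ (FG n) v))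
    (ε : GR n →+* ℤ) (hε : ∀ g : FG n, ε (of ℤ (FG n) g) = 1) (j : Fin n) (g : FG n) (z : GR n) :
    δ j (of ℤ (FG n) g * z) = ε z • δ j (of ℤ (FG n) g) + of ℤ (FG n) g * δ j z := by
  induction z using MonoidAlgebra.induction_on with
  | of h => rw [← map_mul, hδ, hε, one_smul]
  | add y z hy hz =>
    simp only [mul_add, map_add, hy, hz, add_smul]
    abel
  | smul r z hz =>
    rw [mul_smul_comm, map_zsmul, hz, map_zsmul, map_zsmul, smul_add, smul_smul, smul_eq_mul,
      mul_smul_comm]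

lemma fox_mul_generator_mul
    (hδ₁ : ∀ i : Fin n, δ i (of ℤ (FG n) (FreeGroup.of i)) = 1)
    (hδ : ∀ (i : Fin n) (u v : FG n),
      δ i (of ℤ (FG n) (u * v)) = δ i (of ℤ (FG n) u) + of ℤ (FG n) u * δ i (of ℤ (FG n) v))
    (i : Fin n) (p q : FG n) :
    δ i (of ℤ (FG n) (p * FreeGroup.of i * q)) =
      δ i (of ℤ (FG n) (p * q)) + of ℤ (FG n) p +
        (of ℤ (FG n) (p * FreeGroup.of i) - of ℤ (FG n) p) * δ i (of ℤ (FG n) q) := by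
  rw [hδ, hδ, hδ, hδ₁]
  noncomm_ring

lemma foxIter_mul_of_not_mem
    (hδ₂ : ∀ i j : Fin n, j ≠ i → δ i (of ℤ (FG n) (FreeGroup.of j)) = 0)
    (hδ : ∀ (i : Fin n) (u v : FG n),
      δ i (of ℤ (FG n) (u * v)) = δ i (of ℤ (FG n) u) + of ℤ (FG n) u * δ i (of ℤ (FG n) v))
    (ε : GR n →+* ℤ) (hε : ∀ g : FG n, ε (of ℤ (FG n) g) = 1)
    (i : Fin n) (p : FG n) (s : List (Fin n)) (hi : i ∉ s) (z : GR n) :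
    foxIter δ s ((of ℤ (FG n) (p * FreeGroup.of i) - of ℤ (FG n) p) * z) =
      (of ℤ (FG n) (p * FreeGroup.of i) - of ℤ (FG n) p) * foxIter δ s z := by
  induction s with
  | nil => rfl
  | cons j s ih =>
    have hij : i ≠ j := fun h => hi (h ▸ List.mem_cons_self)
    have hpi : δ j (of ℤ (FG n) (p * FreeGroup.of i)) = δ j (of ℤ (FG n) p) := by
      rw [hδ, hδ₂ j i hij, mul_zero, add_zero]
    simp only [foxIter]
    rw [ih (fun h => hi (List.mem_cons_of_mem j h)), sub_mul, map_sub, fox_of_mul δ hδ ε hε,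
      fox_of_mul δ hδ ε hε, hpi, sub_mul]
    abel

end Fox

/-- Skein relation, case `k = r`:
`δ_{i₁}…δ_{iᵣ}(v u⁻¹ x_{iᵣ} u w)(1) - δ_{i₁}…δ_{iᵣ}(vw)(1) = δ_{i₁}…δ_{iᵣ₋₁}(v u⁻¹)(1)`,
i.e. `μ_{i₁…iᵣ}(L, l₊) - μ_{i₁…iᵣ}(L, l₋) = μ_{i₁…iᵣ₋₁}(L - L_{iᵣ}, l∞)`. -/
theorem milnor_skein_relation_last_index (n : ℕ)
    (δ : Fin n → (GR n →ₗ[ℤ] GR n))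
    (hδ₁ : ∀ i : Fin n, δ i (of ℤ (FG n) (FreeGroup.of i)) = 1)
    (hδ₂ : ∀ i j : Fin n, j ≠ i → δ i (of ℤ (FG n) (FreeGroup.of j)) = 0)
    (hδ₃ : ∀ (i : Fin n) (u v : FG n),
      δ i (of ℤ (FG n) (u * v)) =
        δ i (of ℤ (FG n) u) + of ℤ (FG n) u * δ i (of ℤ (FG n) v))
    (ε : GR n →+* ℤ)
    (hε : ∀ g : FG n, ε (of ℤ (FG n) g) = 1)
    (a : List (Fin n)) (i : Fin n) (hnd : (a ++ [i]).Nodup) (u v w : FG n) :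
    ε (foxIter δ (a ++ [i])
        (of ℤ (FG n) (v * (u⁻¹ * FreeGroup.of i * u) * w))) -
      ε (foxIter δ (a ++ [i]) (of ℤ (FG n) (v * w))) =
        ε (foxIter δ a (of ℤ (FG n) (v * u⁻¹))) := by
  have hi : i ∉ a := fun h => (List.nodup_append.mp hnd).2.2 i h i (List.mem_singleton_self i) rfl
  have hpq : v * (u⁻¹ * FreeGroup.of i * u) * w = v * u⁻¹ * FreeGroup.of i * (u * w) := by group
  have hvw : v * w = v * u⁻¹ * (u * w) := by group
  have hcancel : ε (of ℤ (FG n) (v * u⁻¹ * FreeGroup.of i) - of ℤ (FG n) (v * u⁻¹)) = 0 := by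
    rw [map_sub, hε, hε, sub_self]
  rw [foxIter_append, foxIter_append, hpq, hvw]
  simp only [foxIter]
  rw [fox_mul_generator_mul δ hδ₁ hδ₃, foxIter_add, foxIter_add,
    foxIter_mul_of_not_mem δ hδ₂ hδ₃ ε hε i _ a hi, map_add, map_add, map_mul ε, hcancel, zero_mul,
    add_zero, add_sub_cancel_left]
end

section
/- (Skein relation, case k = 1.) Let i_1, …, i_r ∈ {1, …, n} be pairwise distinct indices with r ≥ 1, and let u, v, w ∈ F be group elements. Then δ_{i_1}…δ_{i_r}(v · u⁻¹ x_{i_1} u · w)(1) − δ_{i_1}…δ_{i_r}(v w)(1) = δ_{i_2}…δ_{i_r}(u w)(1), where an empty composite of Fox derivatives applied to a group element and evaluated at 1 is understood to be 1. (Topologically: μ_{i_1…i_r}(L, l₊) − μ_{i_1…i_r}(L, l₋) = μ_{i_2…i_r}(L − L_{i_1}, l₀).) -/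
/-! The skein element `v u⁻¹ x_i u w - v w` factors as `(v u⁻¹) (x_i - 1) (u w)`. By the product
rule a Fox derivative `δ_j` with `δ_j x_i = 0` passes through the left factor `(v u⁻¹)(x_i - 1)`,
because that factor has augmentation zero; so `δ_{i₂} ⋯ δ_{iᵣ}` only differentiates `u w`. The last
derivative `δ_{i₁} = δ_i` then produces `(v u⁻¹) δ_i(x_i) ε(⋯)` plus terms of augmentation zero. -/

open MonoidAlgebra

section FoxDerivation

variable {G : Type*} [Group G]

def IsFoxDerivation (D : MonoidAlgebra ℤ G →ₗ[ℤ] MonoidAlgebra ℤ G) : Prop :=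
  ∀ u v : G, D (of ℤ G (u * v)) = D (of ℤ G u) + of ℤ G u * D (of ℤ G v)

namespace IsFoxDerivation

variable {D : MonoidAlgebra ℤ G →ₗ[ℤ] MonoidAlgebra ℤ G} {ε : MonoidAlgebra ℤ G →+* ℤ}

theorem map_one (hD : IsFoxDerivation D) : D 1 = 0 := by
  have h := hD 1 1
  rw [mul_one, MonoidHom.map_one, one_mul] at h
  exact left_eq_add.mp h

theorem map_mul (hD : IsFoxDerivation D) (hε : ∀ g : G, ε (of ℤ G g) = 1) (α β : MonoidAlgebra ℤ G) :
    D (α * β) = ε β • D α + α * D β := by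
  induction β using MonoidAlgebra.induction_on with
  | of h =>
    induction α using MonoidAlgebra.induction_on with
    | of g => rw [← MonoidHom.map_mul, hD, hε, one_smul]
    | add α α' hα hα' => rw [add_mul, LinearMap.map_add, LinearMap.map_add, hα, hα', smul_add, add_mul]; abel
    | smul r α hα =>
      rw [smul_mul_assoc, LinearMap.map_smul, LinearMap.map_smul, hα, smul_add, smul_comm,
        smul_mul_assoc]
  | add β β' hβ hβ' =>
    rw [mul_add, LinearMap.map_add, LinearMap.map_add, hβ, hβ', RingHom.map_add, add_smul, mul_add]; abel
  | smul r β hβ =>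
    rw [mul_smul_comm, LinearMap.map_smul, LinearMap.map_smul, hβ, map_zsmul, smul_add, smul_smul,
      mul_smul_comm, smul_eq_mul]

theorem map_mul_sub_one_mul (hD : IsFoxDerivation D) (hε : ∀ g : G, ε (of ℤ G g) = 1) (x : G) (α β : MonoidAlgebra ℤ G) :
    D (α * (of ℤ G x - 1) * β) = α * (ε β • D (of ℤ G x) + (of ℤ G x - 1) * D β) := by
  have hx : ε (of ℤ G x - 1) = 0 := by rw [RingHom.map_sub, hε, RingHom.map_one, sub_self]
  rw [mul_assoc, hD.map_mul hε, RingHom.map_mul, hx, zero_mul, zero_smul, zero_add,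
    hD.map_mul hε, LinearMap.map_sub, hD.map_one, sub_zero]

theorem augmentation_map_mul_sub_one_mul (hD : IsFoxDerivation D)
    (hε : ∀ g : G, ε (of ℤ G g) = 1) (x : G)
    (α β : MonoidAlgebra ℤ G) :
    ε (D (α * (of ℤ G x - 1) * β)) = ε α * ε β * ε (D (of ℤ G x)) := by
  rw [hD.map_mul_sub_one_mul hε, RingHom.map_mul, RingHom.map_add, RingHom.map_mul,
    RingHom.map_sub, hε, RingHom.map_one, map_zsmul, smul_eq_mul]
  ring

end IsFoxDerivation

end FoxDerivation

section FoxIter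

variable {n : ℕ} {δ : Fin n → (GR n →ₗ[ℤ] GR n)}

theorem foxIter_sub (l : List (Fin n)) (α β : GR n) :
    foxIter δ l (α - β) = foxIter δ l α - foxIter δ l β := by
  induction l with
  | nil => rfl
  | cons j l ih => simp only [foxIter, ih, LinearMap.map_sub]

theorem foxIter_mul_sub_one_mul (hδ : ∀ j, IsFoxDerivation (δ j)) {ε : GR n →+* ℤ}
    (hε : ∀ g : FG n, ε (of ℤ (FG n) g) = 1) {x : FG n} {l : List (Fin n)}
    (hx : ∀ j ∈ l, δ j (of ℤ (FG n) x) = 0) (α β : GR n) :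
    foxIter δ l (α * (of ℤ (FG n) x - 1) * β) = α * (of ℤ (FG n) x - 1) * foxIter δ l β := by
  induction l with
  | nil => rfl
  | cons j l ih =>
    rw [foxIter, foxIter, ih fun k hk => hx k (List.mem_cons_of_mem j hk),
      (hδ j).map_mul_sub_one_mul hε, hx j List.mem_cons_self, smul_zero, zero_add, mul_assoc]

end FoxIter

/-- Skein relation, case `k = 1`:
`δ_{i₁}…δ_{iᵣ}(v u⁻¹ x_{i₁} u w)(1) - δ_{i₁}…δ_{iᵣ}(vw)(1) = δ_{i₂}…δ_{iᵣ}(u w)(1)`,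
i.e. `μ_{i₁…iᵣ}(L, l₊) - μ_{i₁…iᵣ}(L, l₋) = μ_{i₂…iᵣ}(L - L_{i₁}, l₀)`. -/
theorem milnor_skein_relation_first_index (n : ℕ)
    (δ : Fin n → (GR n →ₗ[ℤ] GR n))
    (hδ₁ : ∀ i : Fin n, δ i (of ℤ (FG n) (FreeGroup.of i)) = 1)
    (hδ₂ : ∀ i j : Fin n, j ≠ i → δ i (of ℤ (FG n) (FreeGroup.of j)) = 0)
    (hδ₃ : ∀ (i : Fin n) (u v : FG n),
      δ i (of ℤ (FG n) (u * v)) =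
        δ i (of ℤ (FG n) u) + of ℤ (FG n) u * δ i (of ℤ (FG n) v))
    (ε : GR n →+* ℤ)
    (hε : ∀ g : FG n, ε (of ℤ (FG n) g) = 1)
    (b : List (Fin n)) (i : Fin n) (hnd : (i :: b).Nodup) (u v w : FG n) :
    ε (foxIter δ (i :: b)
        (of ℤ (FG n) (v * (u⁻¹ * FreeGroup.of i * u) * w))) -
      ε (foxIter δ (i :: b) (of ℤ (FG n) (v * w))) =
        ε (foxIter δ b (of ℤ (FG n) (u * w))) := by
  have hib : i ∉ b := (List.nodup_cons.mp hnd).1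
  have hfactor : of ℤ (FG n) (v * (u⁻¹ * FreeGroup.of i * u) * w) - of ℤ (FG n) (v * w) =
      of ℤ (FG n) (v * u⁻¹) * (of ℤ (FG n) (FreeGroup.of i) - 1) * of ℤ (FG n) (u * w) := by
    rw [show v * (u⁻¹ * FreeGroup.of i * u) * w = v * u⁻¹ * FreeGroup.of i * (u * w) by group,
      show v * w = v * u⁻¹ * (u * w) by group]
    simp only [MonoidHom.map_mul]
    noncomm_ring
  calc _ = ε (δ i (foxIter δ b (of ℤ (FG n) (v * u⁻¹) * (of ℤ (FG n) (FreeGroup.of i) - 1)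
          * of ℤ (FG n) (u * w)))) := by
        rw [← map_sub, foxIter, foxIter, ← LinearMap.map_sub, ← foxIter_sub, hfactor]
    _ = ε (foxIter δ b (of ℤ (FG n) (u * w))) := by
        rw [foxIter_mul_sub_one_mul hδ₃ hε fun j hj => hδ₂ j i fun hji => hib (hji ▸ hj),
          IsFoxDerivation.augmentation_map_mul_sub_one_mul (hδ₃ i) hε, hδ₁, hε, RingHom.map_one, one_mul, mul_one]
end
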